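/- For every natural number N there exists a finite connected bichromatic graph Γ that is locally like W(F4) and has more than N vertices; in particular, there exist infinitely many pairwise non-isomorphic finite connected bichromatic graphs that are locally like W(F4). -/

import Mathlib

/-- The Weyl graph of type `Bₙ`: vertices `y_{i,j}`, `1 ≤ i,j ≤ n`; distinct vertices
`y_{i,j}`, `y_{k,l}` are adjacent iff `{i,j} ∩ {k,l} = ∅` or `(k,l) = (j,i)`. -/
def WB (n : ℕ) : SimpleGraph (Fin n × Fin n) where
  Adj p q :=
    p ≠ q ∧ (({p.1, p.2} : Set (Fin n)) ∩ {q.1, q.2} = ∅ ∨ (q.1 = p.2 ∧ q.2 = p.1))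
  symm := by
    constructor
    rintro ⟨a, b⟩ ⟨c, d⟩ ⟨hne, h⟩
    refine ⟨hne.symm, ?_⟩
    rcases h with h | ⟨h1, h2⟩
    · left; rw [Set.inter_comm] at h; exact h
    · right; exact ⟨h2.symm, h1.symm⟩
  loopless := by constructor; rintro ⟨a, b⟩ ⟨hne, _⟩; exact hne rfl

/-- The coloring of `W(Bₙ)`: `y_{i,i}` is short (`true`), `y_{i,j}` with `i ≠ j` is long. -/
def WBcolor (n : ℕ) (p : Fin n × Fin n) : Bool := decide (p.1 = p.2)

/-- The coloring of `W(Cₙ)`: obtained from `W(Bₙ)` by exchanging short and long vertices. -/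
def WCcolor (n : ℕ) (p : Fin n × Fin n) : Bool := !(WBcolor n p)

/-- Isomorphism of bichromatic graphs: a graph isomorphism preserving vertex types
(`true` = short, `false` = long). -/
def BIso {V : Type*} {W : Type*} (G : SimpleGraph V) (cG : V → Bool)
    (H : SimpleGraph W) (cH : W → Bool) : Prop :=
  ∃ e : G ≃g H, ∀ v : V, cH (e v) = cG v

/-- A bichromatic graph is locally like `W(F₄)` if the local graph at every short vertex
is isomorphic to `W(B₃)` and the local graph at every long vertex is isomorphic to `W(C₃)`. -/
def LocallyLikeWF4 {V : Type*} (G : SimpleGraph V) (c : V → Bool) : Prop :=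
  ∀ v : V,
    (c v = true → BIso (G.induce (G.neighborSet v)) (fun x => c x.1) (WB 3) (WBcolor 3)) ∧
    (c v = false → BIso (G.induce (G.neighborSet v)) (fun x => c x.1) (WB 3) (WCcolor 3))


/-!
The Weyl graph `W(F₄)` on the 24 positive roots of `F₄` (adjacent when orthogonal) is itself
locally like `W(F₄)`: the positive roots orthogonal to a short (long) root form a root system of
type `B₃` (`C₃`). Larger examples are cyclic covers of it. Take a `ℤ`-valued voltage on the
edges of `W(F₄)` that sums to zero around every triangle but to `1` around some 4-cycle. The
`ℤ/k`-derived cover then maps every neighbourhood isomorphically onto a neighbourhood downstairs,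
so it is again locally like `W(F₄)`, and the 4-cycle lifts to a path joining consecutive levels,
so it is connected. It has `24 k` vertices.
-/

open SimpleGraph Function

theorem WB_adj_iff {n : ℕ} {p q : Fin n × Fin n} :
    (WB n).Adj p q ↔ p ≠ q ∧
      ((p.1 ≠ q.1 ∧ p.1 ≠ q.2 ∧ p.2 ≠ q.1 ∧ p.2 ≠ q.2) ∨ (q.1 = p.2 ∧ q.2 = p.1)) := by
  refine and_congr_right' (or_congr_left ?_)
  simp only [Set.eq_empty_iff_forall_notMem, Set.mem_inter_iff, Set.mem_insert_iff,
    Set.mem_singleton_iff, not_and_or, not_or]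
  constructor
  · intro h
    refine ⟨fun e => ?_, fun e => ?_, fun e => ?_, fun e => ?_⟩ <;>
      first | simpa [e] using h q.1 | simpa [e] using h q.2
  · grind

instance (n : ℕ) : DecidableRel (WB n).Adj := fun _ _ => decidable_of_iff _ WB_adj_iff.symm

theorem BIso.trans {U V W : Type*} {G : SimpleGraph U} {cG : U → Bool} {H : SimpleGraph V}
    {cH : V → Bool} {K : SimpleGraph W} {cK : W → Bool} :
    BIso G cG H cH → BIso H cH K cK → BIso G cG K cK
  | ⟨e, he⟩, ⟨e', he'⟩ => ⟨e.trans e', fun v => (he' (e v)).trans (he v)⟩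

theorem biso_induce_neighborSet_of_chart {V W : Type*} {G : SimpleGraph V} {c : V → Bool}
    {H : SimpleGraph W} {cH : W → Bool} {v : V} (φ : W → V) (hadj : ∀ p, G.Adj v (φ p))
    (hinj : φ.Injective) (hsurj : ∀ w, G.Adj v w → ∃ p, φ p = w)
    (hmap : ∀ p q, G.Adj (φ p) (φ q) ↔ H.Adj p q) (hc : ∀ p, c (φ p) = cH p) :
    BIso (G.induce (G.neighborSet v)) (fun x => c x.1) H cH := by
  let e : W ≃ G.neighborSet v := Equiv.ofBijective (fun p => ⟨φ p, hadj p⟩)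
    ⟨fun p q h => hinj (congrArg Subtype.val h),
      fun w => (hsurj w w.2).imp fun _ hp => Subtype.ext hp⟩
  let iso : H ≃g G.induce (G.neighborSet v) := ⟨e, fun {p q} => hmap p q⟩
  refine ⟨iso.symm, fun x => ?_⟩
  obtain ⟨p, rfl⟩ := iso.surjective x
  rw [RelIso.symm_apply_apply]
  exact (hc p).symm

def IsTriangleCocycle {V A : Type*} [AddCommGroup A] (G : SimpleGraph V) (f : V → V → A) :
    Prop :=
  ∀ u v w, G.Adj u v → G.Adj v w → G.Adj u w → f u w = f u v + f v w

section VoltageCover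

variable {V A : Type*} [AddCommGroup A] {G : SimpleGraph V} {f : V → V → A}
  (hf : ∀ v w, f w v = -f v w)

variable (G f) in
/-- The derived graph (in the sense of Gross and Tucker) of the voltage assignment `f`. -/
def voltageCover : SimpleGraph (V × A) where
  Adj x y := G.Adj x.1 y.1 ∧ y.2 = x.2 + f x.1 y.1
  symm := ⟨fun x y ⟨h, e⟩ => ⟨h.symm, by rw [e, hf x.1 y.1, add_neg_cancel_right]⟩⟩
  loopless := ⟨fun x h => G.loopless.irrefl x.1 h.1⟩

def voltageCover.induceNeighborSetIso (hcoc : IsTriangleCocycle G f) (x : V × A) :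
    (voltageCover G f hf).induce ((voltageCover G f hf).neighborSet x) ≃g
      G.induce (G.neighborSet x.1) where
  toFun y := ⟨y.1.1, y.2.1⟩
  invFun w := ⟨(w.1, x.2 + f x.1 w.1), w.2, rfl⟩
  left_inv y := Subtype.ext (Prod.ext rfl y.2.2.symm)
  right_inv _ := rfl
  map_rel_iff' := by
    rintro ⟨⟨w, b⟩, hw, hb : b = x.2 + f x.1 w⟩ ⟨⟨u, c⟩, hu, hc : c = x.2 + f x.1 u⟩
    change G.Adj w u ↔ G.Adj w u ∧ c = b + f w u
    exact ⟨fun h => ⟨h, by rw [hc, hb, hcoc _ _ _ hw h hu, add_assoc]⟩, And.left⟩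

theorem LocallyLikeWF4.voltageCover {c : V → Bool} (hG : LocallyLikeWF4 G c)
    (hcoc : IsTriangleCocycle G f) :
    LocallyLikeWF4 (voltageCover G f hf) (fun x => c x.1) := by
  intro x
  have hloc : BIso _ _ (G.induce (G.neighborSet x.1)) (fun w => c w.1) :=
    ⟨voltageCover.induceNeighborSetIso hf hcoc x, fun _ => rfl⟩
  exact ⟨fun h => hloc.trans ((hG x.1).1 h), fun h => hloc.trans ((hG x.1).2 h)⟩

def voltageCover.addRight (t : A) : voltageCover G f hf →g voltageCover G f hf where
  toFun x := (x.1, x.2 + t)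
  map_rel' {x y} h := ⟨h.1, show y.2 + t = x.2 + t + f x.1 y.1 by rw [h.2, add_right_comm]⟩

theorem voltageCover.reachable_add_right {x y : V × A}
    (h : (voltageCover G f hf).Reachable x y) (t : A) :
    (voltageCover G f hf).Reachable (x.1, x.2 + t) (y.1, y.2 + t) :=
  h.map (voltageCover.addRight hf t)

theorem voltageCover.exists_reachable_of_reachable {v w : V} (h : G.Reachable v w) :
    ∃ c : A, ∀ a, (voltageCover G f hf).Reachable (v, a) (w, a + c) := by
  obtain ⟨p⟩ := h
  induction p with
  | nil => exact ⟨0, fun a => by rw [add_zero]⟩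
  | @cons u v' _ hadj _ ih =>
    obtain ⟨c, hc⟩ := ih
    have hlift (a : A) : (voltageCover G f hf).Adj (u, a) (v', a + f u v') := ⟨hadj, rfl⟩
    refine ⟨f u v' + c, fun a => (hlift a).reachable.trans ?_⟩
    rw [← add_assoc]
    exact hc _

theorem voltageCover_connected {k : ℕ} {f : V → V → ZMod k} (hf : ∀ v w, f w v = -f v w)
    (hG : G.Connected) {v : V} (hloop : (voltageCover G f hf).Reachable (v, 0) (v, 1)) :
    (voltageCover G f hf).Connected := by
  have hlevel : ∀ n : ℤ, (voltageCover G f hf).Reachable (v, 0) (v, n) := by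
    intro n
    induction n using Int.induction_on with
    | zero => rw [Int.cast_zero]
    | succ n ih =>
      refine ih.trans ?_
      simpa [add_comm] using voltageCover.reachable_add_right hf hloop n
    | pred n ih =>
      refine ih.trans ?_
      simpa [sub_eq_add_neg, add_comm] using
        (voltageCover.reachable_add_right hf hloop (-n - 1)).symm
  have hall : ∀ y, (voltageCover G f hf).Reachable (v, 0) y := by
    rintro ⟨w, b⟩
    obtain ⟨c, hc⟩ := voltageCover.exists_reachable_of_reachable hf (hG.preconnected v w)
    obtain ⟨n, hn⟩ := ZMod.intCast_surjective (b - c)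
    simpa [hn] using (hlevel n).trans (hc _)
  exact (connected_iff _).2 ⟨fun x y => (hall x).symm.trans (hall y), ⟨(v, 0)⟩⟩

end VoltageCover

/-- The positive roots of `F₄`, in doubled coordinates: short roots have squared length `4`,
long roots `8`. -/
def f4Root : Fin 24 → Fin 4 → ℤ :=
  ![![2, 0, 0, 0], ![0, 2, 0, 0], ![0, 0, 2, 0], ![0, 0, 0, 2],
    ![1, 1, 1, 1], ![1, 1, 1, -1], ![1, 1, -1, 1], ![1, 1, -1, -1],
    ![1, -1, 1, 1], ![1, -1, 1, -1], ![1, -1, -1, 1], ![1, -1, -1, -1],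
    ![2, 2, 0, 0], ![2, -2, 0, 0], ![2, 0, 2, 0], ![2, 0, -2, 0],
    ![2, 0, 0, 2], ![2, 0, 0, -2], ![0, 2, 2, 0], ![0, 2, -2, 0],
    ![0, 2, 0, 2], ![0, 2, 0, -2], ![0, 0, 2, 2], ![0, 0, 2, -2]]

def WF4 : SimpleGraph (Fin 24) where
  Adj i j := f4Root i ⬝ᵥ f4Root j = 0
  symm := ⟨fun _ _ h => by rwa [dotProduct_comm]⟩
  loopless := ⟨by decide⟩

instance : DecidableRel WF4.Adj := fun i j =>
  inferInstanceAs (Decidable (f4Root i ⬝ᵥ f4Root j = 0))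

def WF4color (i : Fin 24) : Bool := decide (f4Root i ⬝ᵥ f4Root i = 4)

/-- `f4Chart v i j` is the neighbour of `v` playing the role of `y_{i,j}` in `W(B₃)`. -/
def f4Chart : Fin 24 → Fin 3 → Fin 3 → Fin 24 :=
  ![![![1, 18, 20], ![19, 2, 22], ![21, 23, 3]], ![![0, 14, 16], ![15, 2, 22], ![17, 23, 3]],
    ![![0, 12, 16], ![13, 1, 20], ![17, 21, 3]], ![![0, 12, 14], ![13, 1, 18], ![15, 19, 2]],
    ![![10, 13, 15], ![23, 9, 17], ![21, 19, 7]], ![![11, 13, 15], ![22, 8, 16], ![20, 19, 6]],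
    ![![8, 13, 14], ![22, 11, 17], ![21, 18, 5]], ![![9, 13, 14], ![23, 10, 16], ![20, 18, 4]],
    ![![6, 12, 15], ![23, 5, 17], ![20, 18, 11]], ![![7, 12, 15], ![22, 4, 16], ![21, 18, 10]],
    ![![4, 12, 14], ![22, 7, 17], ![20, 19, 9]], ![![5, 12, 14], ![23, 6, 16], ![21, 19, 8]],
    ![![22, 2, 8], ![3, 23, 9], ![11, 10, 13]], ![![22, 2, 4], ![3, 23, 5], ![7, 6, 12]],
    ![![20, 1, 6], ![3, 21, 7], ![11, 10, 15]], ![![20, 1, 4], ![3, 21, 5], ![9, 8, 14]],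
    ![![18, 1, 5], ![2, 19, 7], ![11, 9, 17]], ![![18, 1, 4], ![2, 19, 6], ![10, 8, 16]],
    ![![16, 0, 6], ![3, 17, 7], ![8, 9, 19]], ![![16, 0, 4], ![3, 17, 5], ![10, 11, 18]],
    ![![14, 0, 5], ![2, 15, 7], ![8, 10, 21]], ![![14, 0, 4], ![2, 15, 6], ![9, 11, 20]],
    ![![12, 0, 5], ![1, 13, 9], ![6, 10, 23]], ![![12, 0, 4], ![1, 13, 8], ![7, 11, 22]]]

theorem WF4_adj_f4Chart : ∀ v p, WF4.Adj v (uncurry (f4Chart v) p) := by decide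

theorem f4Chart_injective : ∀ v, (uncurry (f4Chart v)).Injective := by
  unfold Function.Injective
  decide

theorem exists_f4Chart_eq_of_adj : ∀ v w, WF4.Adj v w → ∃ p, uncurry (f4Chart v) p = w := by
  decide

theorem WF4_adj_f4Chart_iff : ∀ v p q,
    WF4.Adj (uncurry (f4Chart v) p) (uncurry (f4Chart v) q) ↔ (WB 3).Adj p q := by
  decide

theorem WF4color_f4Chart : ∀ v p, WF4color (uncurry (f4Chart v) p) =
    if WF4color v then WBcolor 3 p else WCcolor 3 p := by
  decide

theorem WF4_locallyLikeWF4 : LocallyLikeWF4 WF4 WF4color := by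
  intro v
  have hchart (cH : Fin 3 × Fin 3 → Bool) (hc : ∀ p, WF4color (uncurry (f4Chart v) p) = cH p) :
      BIso (WF4.induce (WF4.neighborSet v)) (fun x => WF4color x.1) (WB 3) cH :=
    biso_induce_neighborSet_of_chart _ (WF4_adj_f4Chart v) (f4Chart_injective v)
      (exists_f4Chart_eq_of_adj v) (WF4_adj_f4Chart_iff v) hc
  exact ⟨fun h => hchart _ fun p => by rw [WF4color_f4Chart, h, if_pos rfl],
    fun h => hchart _ fun p => by rw [WF4color_f4Chart, h, if_neg Bool.false_ne_true]⟩

theorem WF4_connected : WF4.Connected := by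
  have hdiam : ∀ u v, ∃ w, (u = w ∨ WF4.Adj u w) ∧ (w = v ∨ WF4.Adj w v) := by decide
  refine (connected_iff _).2 ⟨fun u v => ?_, ⟨0⟩⟩
  obtain ⟨w, huw, hwv⟩ := hdiam u v
  have reach {x y} (h : x = y ∨ WF4.Adj x y) : WF4.Reachable x y :=
    h.elim (fun e => e ▸ Reachable.refl x) Adj.reachable
  exact (reach huw).trans (reach hwv)

def f4VoltageEdges : List (Fin 24 × Fin 24) :=
  [(12, 8), (12, 9), (12, 10), (12, 11), (12, 22), (12, 23),
    (13, 4), (13, 5), (13, 6), (13, 7), (13, 22), (13, 23)]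

def f4Voltage (v w : Fin 24) : ℤ :=
  (if (v, w) ∈ f4VoltageEdges then 1 else 0) - (if (w, v) ∈ f4VoltageEdges then 1 else 0)

theorem f4Voltage_swap (v w : Fin 24) : f4Voltage w v = -f4Voltage v w := by
  unfold f4Voltage
  ring

theorem isTriangleCocycle_f4Voltage : IsTriangleCocycle WF4 f4Voltage := by
  unfold IsTriangleCocycle
  decide

def f4Cover (k : ℕ) : SimpleGraph (Fin 24 × ZMod k) :=
  voltageCover WF4 (fun v w => (f4Voltage v w : ZMod k))
    (fun v w => by rw [f4Voltage_swap, Int.cast_neg])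

theorem f4Cover_locallyLikeWF4 (k : ℕ) :
    LocallyLikeWF4 (f4Cover k) (fun x => WF4color x.1) :=
  WF4_locallyLikeWF4.voltageCover _ fun u v w huv hvw huw => by
    rw [isTriangleCocycle_f4Voltage u v w huv hvw huw, Int.cast_add]

/-- Lift of the 4-cycle `12, 22, 0, 2`, whose voltage is `1`. -/
theorem f4Cover_reachable_zero_one (k : ℕ) : (f4Cover k).Reachable (12, 0) (12, 1) := by
  have step (v w : Fin 24) (a : ZMod k) (h : WF4.Adj v w) :
      (f4Cover k).Reachable (v, a) (w, a + f4Voltage v w) := Adj.reachable ⟨h, rfl⟩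
  have hcycle := (((step 12 22 0 (by decide)).trans (step 22 0 _ (by decide))).trans
    (step 0 2 _ (by decide))).trans (step 2 12 _ (by decide))
  have hsum :
      (0 : ZMod k) + f4Voltage 12 22 + f4Voltage 22 0 + f4Voltage 0 2 + f4Voltage 2 12 = 1 := by
    rw [show f4Voltage 12 22 = 1 by decide, show f4Voltage 22 0 = 0 by decide,
      show f4Voltage 0 2 = 0 by decide, show f4Voltage 2 12 = 0 by decide]
    simp
  rwa [hsum] at hcycle

theorem f4Cover_connected (k : ℕ) : (f4Cover k).Connected :=
  voltageCover_connected _ WF4_connected (f4Cover_reachable_zero_one k)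

theorem infinitely_many_locally_WF4 :
    (∀ N : ℕ, ∃ (V : Type) (G : SimpleGraph V) (c : V → Bool),
      Finite V ∧ G.Connected ∧ LocallyLikeWF4 G c ∧ N < Nat.card V) ∧
    ∃ (V : ℕ → Type) (G : ∀ i, SimpleGraph (V i)) (c : ∀ i, V i → Bool),
      (∀ i, Finite (V i) ∧ (G i).Connected ∧ LocallyLikeWF4 (G i) (c i)) ∧
      ∀ i j, i ≠ j → ¬ BIso (G i) (c i) (G j) (c j) := by
  have hcover (k : ℕ) : Finite (Fin 24 × ZMod (k + 1)) ∧ (f4Cover (k + 1)).Connected ∧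
      LocallyLikeWF4 (f4Cover (k + 1)) (fun x => WF4color x.1) :=
    ⟨inferInstance, f4Cover_connected _, f4Cover_locallyLikeWF4 _⟩
  have hcard (k : ℕ) : Nat.card (Fin 24 × ZMod k) = 24 * k := by simp
  refine ⟨fun N => ⟨_, _, _, (hcover N).1, (hcover N).2.1, (hcover N).2.2, ?_⟩,
    ⟨_, _, _, hcover, fun i j hij ⟨e, _⟩ => hij ?_⟩⟩
  · rw [hcard]
    omega
  · have he := Nat.card_congr e.toEquiv
    rw [hcard, hcard] at he
    omega
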